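/- arXiv:1807.06280 — 2 statements merged into one kernel-verified Lean document; each statement's English description precedes it below -/
import Mathlib

section
/- Fix n, m ∈ ℕ. Let S be a real m×m matrix, d ∈ ℝ^m, and let 𝒻 : ℝ^(n+1) → ℝ^m be a continuous map. Let L_p and L_q be real (n+1)×(n+1) lower triangular matrices with all diagonal entries equal to 1, and for θ ∈ ℝ^(n+1) let D_θ = diag(θ_0,…,θ_n) and L_θ = (I − D_θ)L_p + D_θ L_q. Fix an exponent vector (p_0,…,p_n) with each p_j ∈ {1,2}, parameters r > 0, γ̄ > 0, β ∈ ℝ with rβ > 3/2, η > 0, and let L₁ be the (n+1)×(n+1) lower bidiagonal matrix with 1 on the diagonal and −1 on the subdiagonal. Define, for f ∈ ℝ^(n+1), γ ∈ (0,∞)^(n+1), θ ∈ [0,1]^(n+1), T(f,γ,θ) = (1/2)‖S(d − 𝒻(f))‖₂² + (1/2)Σ_{j=0}^{n} γ_j^{−p_j/2}|(L_θ f)_j|^{p_j} + (1/2)Σ_{j=0}^{n} log γ_j + Σ_{j=0}^{n}(γ_j/γ̄)^r − (rβ − 1)Σ_{j=0}^{n} log γ_j + (1/(2η))‖L₁θ‖₂².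 Then T attains its infimum on ℝ^(n+1) × (0,∞)^(n+1) × [0,1]^(n+1), i.e., the minimization problem has a solution. -/
open Matrix Finset

/-- Squared Euclidean norm of a vector. -/
noncomputable def enormSq {m : ℕ} (x : Fin m → ℝ) : ℝ := ∑ i, (x i) ^ 2

/-- The combined matrix `L_θ = (I − D_θ) L_p + D_θ L_q`. -/
noncomputable def Lcomb {n : ℕ} (Lp Lq : Matrix (Fin (n + 1)) (Fin (n + 1)) ℝ)
    (θ : Fin (n + 1) → ℝ) : Matrix (Fin (n + 1)) (Fin (n + 1)) ℝ :=
  (1 - Matrix.diagonal θ) * Lp + Matrix.diagonal θ * Lq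

/-- The lower bidiagonal finite-difference matrix `L₁` with `1` on the diagonal and `−1`
on the subdiagonal. -/
noncomputable def Lone (n : ℕ) : Matrix (Fin (n + 1)) (Fin (n + 1)) ℝ :=
  fun i j => if i = j then 1 else if (j : ℕ) + 1 = (i : ℕ) then -1 else 0

/-! The proof is Weierstrass' theorem on a compact superset of a sublevel set. Merging the two
logarithmic terms, each `γ_j` enters `T` only through `(γ_j / γ̄)^r - (rβ - 3/2) log γ_j`, which
tends to `+∞` both as `γ_j → 0` (as `rβ > 3/2`) and as `γ_j → ∞`; since the other terms are
nonnegative, a sublevel set of `T` confines every `γ_j` to some `[a, b]` with `a > 0`. Then each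
`γ_j^(-p_j/2) |(L_θ f)_j|^(p_j)` is bounded, hence so is `L_θ f`. Finally `L_θ` is unit lower
triangular, so `L_θ⁻¹ = adj L_θ` depends continuously on `θ` and is bounded on `[0,1]^(n+1)`,
which bounds `f`. -/

open Real

attribute [local instance] Matrix.linftyOpNormedAddCommGroup

theorem exists_isMinOn_of_sublevel_subset {X α : Type*} [TopologicalSpace X] [LinearOrder α]
    [TopologicalSpace α] [ClosedIicTopology α] {f : X → α} {D K : Set X} {x₀ : X}
    (hK : IsCompact K) (hKD : K ⊆ D) (hf : ContinuousOn f D) (hx₀ : x₀ ∈ D)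
    (hsub : ∀ x ∈ D, f x ≤ f x₀ → x ∈ K) : ∃ x ∈ D, IsMinOn f D x := by
  obtain ⟨x, hxK, hmin⟩ := hK.exists_isMinOn ⟨x₀, hsub x₀ hx₀ le_rfl⟩ (hf.mono hKD)
  refine ⟨x, hKD hxK, fun y hy => ?_⟩
  by_cases hy₀ : f y ≤ f x₀
  · exact hmin (hsub y hy hy₀)
  · exact (hmin (hsub x₀ hx₀ le_rfl)).trans (not_le.1 hy₀).le

theorem mul_log_le_add_mul_log_sub_one {c y : ℝ} (hc : 0 < c) (hy : 0 < y) :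
    c * log y ≤ y + c * (log c - 1) := by
  have h := mul_le_mul_of_nonneg_left (log_le_sub_one_of_pos (div_pos hy hc)) hc.le
  rw [log_div hy.ne' hc.ne', mul_sub, mul_sub, mul_div_cancel₀ _ hc.ne'] at h
  linarith

theorem exists_mul_log_le_rpow_add {c r γbar : ℝ} (hc : 0 < c) (hr : 0 < r) (hγbar : 0 < γbar) :
    ∃ K, ∀ t, 0 < t → c * log t ≤ (t / γbar) ^ r + K := by
  refine ⟨c / r * (log (c / r) - 1) + c * log γbar, fun t ht => ?_⟩
  have ht' := div_pos ht hγbar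
  have h := mul_log_le_add_mul_log_sub_one (div_pos hc hr) (rpow_pos_of_pos ht' r)
  rw [log_rpow ht', log_div ht.ne' hγbar.ne', ← mul_assoc, div_mul_cancel₀ _ hr.ne'] at h
  linarith

noncomputable def gammaPenalty (γbar r c t : ℝ) : ℝ := (t / γbar) ^ r - c * log t

section gammaPenalty

variable {γbar r c : ℝ}

theorem exists_le_gammaPenalty (hc : 0 < c) (hr : 0 < r) (hγbar : 0 < γbar) :
    ∃ φ₀, ∀ t, 0 < t → φ₀ ≤ gammaPenalty γbar r c t := by
  obtain ⟨K, hK⟩ := exists_mul_log_le_rpow_add hc hr hγbar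
  exact ⟨-K, fun t ht => by unfold gammaPenalty; linarith [hK t ht]⟩

theorem exists_Icc_of_gammaPenalty_le (hc : 0 < c) (hr : 0 < r) (hγbar : 0 < γbar) (M : ℝ) :
    ∃ a b, 0 < a ∧ ∀ t, 0 < t → gammaPenalty γbar r c t ≤ M → t ∈ Set.Icc a b := by
  obtain ⟨K, hK⟩ := exists_mul_log_le_rpow_add (add_pos hc one_pos) hr hγbar
  refine ⟨exp (-(M / c)), exp (M + K), exp_pos _, fun t ht hM => ?_⟩
  unfold gammaPenalty at hM
  have hpow : 0 ≤ (t / γbar) ^ r := rpow_nonneg (div_pos ht hγbar).le r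
  have hlower : -(M / c) ≤ log t := by
    rw [neg_le, le_div_iff₀ hc]
    linarith
  have hupper : log t ≤ M + K := by linarith [hK t ht]
  rw [← exp_log ht]
  exact ⟨exp_le_exp.2 hlower, exp_le_exp.2 hupper⟩

end gammaPenalty

theorem abs_le_of_rpow_neg_half_mul_rpow_le {p γ b B y : ℝ} (hp : 1 ≤ p) (hγ : 0 < γ)
    (hγb : γ ≤ b) (h : γ ^ (-p / 2) * |y| ^ p ≤ B) : |y| ≤ max 1 B * √b := by
  have hp0 : 0 < p := by linarith
  have hb : 0 ≤ b := hγ.le.trans hγb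
  have hy : |y| ^ p ≤ B * γ ^ (p / 2) := by
    have : |y| ^ p = γ ^ (-p / 2) * |y| ^ p * γ ^ (p / 2) := by
      rw [mul_comm (γ ^ _), mul_assoc, ← rpow_add hγ, neg_div, neg_add_cancel, rpow_zero,
        mul_one]
    rw [this]
    exact mul_le_mul_of_nonneg_right h (rpow_nonneg hγ.le _)
  rw [← rpow_le_rpow_iff (abs_nonneg y) (by positivity) hp0]
  calc |y| ^ p ≤ B * γ ^ (p / 2) := hy
    _ ≤ max 1 B * b ^ (p / 2) :=
        mul_le_mul (le_max_right _ _) (rpow_le_rpow hγ.le hγb (by positivity))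
          (rpow_nonneg hγ.le _) (by positivity)
    _ ≤ max 1 B ^ p * √b ^ p := by
        rw [sqrt_eq_rpow, ← rpow_mul hb, one_div_mul_eq_div]
        exact mul_le_mul_of_nonneg_right (self_le_rpow_of_one_le (le_max_left _ _) hp)
          (rpow_nonneg hb _)
    _ = (max 1 B * √b) ^ p := (mul_rpow (by positivity) (sqrt_nonneg b)).symm

theorem exists_norm_le_mul_norm_mulVec_of_det_eq_one {X R ι : Type*} [TopologicalSpace X]
    [NormedCommRing R] [Fintype ι] [DecidableEq ι] {A : X → Matrix ι ι R} (hA : Continuous A)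
    {K : Set X} (hK : IsCompact K) (hdet : ∀ x ∈ K, (A x).det = 1) :
    ∃ C, 0 ≤ C ∧ ∀ x ∈ K, ∀ v, ‖v‖ ≤ C * ‖A x *ᵥ v‖ := by
  obtain ⟨C, hC⟩ := hK.exists_bound_of_continuousOn hA.matrix_adjugate.continuousOn
  refine ⟨max C 0, le_max_right _ _, fun x hx v => ?_⟩
  have hv : (A x).adjugate *ᵥ (A x *ᵥ v) = v := by
    rw [mulVec_mulVec, adjugate_mul, hdet x hx, one_smul, one_mulVec]
  calc ‖v‖ = ‖(A x).adjugate *ᵥ (A x *ᵥ v)‖ := by rw [hv]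
    _ ≤ ‖(A x).adjugate‖ * ‖A x *ᵥ v‖ := linfty_opNorm_mulVec _ _
    _ ≤ max C 0 * ‖A x *ᵥ v‖ :=
        mul_le_mul_of_nonneg_right ((hC x hx).trans (le_max_left _ _)) (norm_nonneg _)

section Lcomb

variable {n : ℕ} {Lp Lq : Matrix (Fin (n + 1)) (Fin (n + 1)) ℝ}

theorem Lcomb_isLowerTriangular (hLp : Lp.IsLowerTriangular) (hLq : Lq.IsLowerTriangular)
    (θ : Fin (n + 1) → ℝ) : (Lcomb Lp Lq θ).IsLowerTriangular :=
  ((blockTriangular_one.sub (blockTriangular_diagonal θ)).mul hLp).add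
    ((blockTriangular_diagonal θ).mul hLq)

theorem Lcomb_apply_self (θ : Fin (n + 1) → ℝ) (i : Fin (n + 1)) :
    Lcomb Lp Lq θ i i = (1 - θ i) * Lp i i + θ i * Lq i i := by
  simp only [Lcomb, Matrix.sub_mul, one_mul, Matrix.add_apply, Matrix.sub_apply, diagonal_mul,
    add_left_inj]
  ring

theorem det_Lcomb (hLp : Lp.IsLowerTriangular) (hLq : Lq.IsLowerTriangular)
    (hLpDiag : ∀ i, Lp i i = 1) (hLqDiag : ∀ i, Lq i i = 1) (θ : Fin (n + 1) → ℝ) :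
    (Lcomb Lp Lq θ).det = 1 := by
  rw [det_of_isLowerTriangular _ (Lcomb_isLowerTriangular hLp hLq θ)]
  simp [Lcomb_apply_self, hLpDiag, hLqDiag]

@[fun_prop]
theorem continuous_Lcomb : Continuous fun θ => Lcomb Lp Lq θ := by
  unfold Lcomb
  fun_prop

end Lcomb

theorem enormSq_nonneg {k : ℕ} (x : Fin k → ℝ) : 0 ≤ enormSq x :=
  Finset.sum_nonneg fun i _ => sq_nonneg (x i)

def aarmDomain (n : ℕ) :
    Set ((Fin (n + 1) → ℝ) × (Fin (n + 1) → ℝ) × (Fin (n + 1) → ℝ)) :=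
  Set.univ ×ˢ (Set.univ.pi fun _ => Set.Ioi 0) ×ˢ Set.univ.pi fun _ => Set.Icc 0 1

section Functional

variable {n m : ℕ} (S : Matrix (Fin m) (Fin m) ℝ) (d : Fin m → ℝ)
  (F : (Fin (n + 1) → ℝ) → (Fin m → ℝ)) (Lp Lq : Matrix (Fin (n + 1)) (Fin (n + 1)) ℝ)
  (p : Fin (n + 1) → ℝ) (r γbar β η : ℝ)

noncomputable def aarm (f γ θ : Fin (n + 1) → ℝ) : ℝ :=
  (1 / 2) * enormSq (S.mulVec (d - F f))
    + (1 / 2) * ∑ j, (γ j) ^ (-(p j) / 2) * |(Lcomb Lp Lq θ).mulVec f j| ^ (p j)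
    + (1 / 2) * ∑ j, Real.log (γ j)
    + ∑ j, (γ j / γbar) ^ r
    - (r * β - 1) * ∑ j, Real.log (γ j)
    + (1 / (2 * η)) * enormSq ((Lone n).mulVec θ)

theorem aarm_eq_add_sum_gammaPenalty (f γ θ : Fin (n + 1) → ℝ) :
    aarm S d F Lp Lq p r γbar β η f γ θ =
      (1 / 2) * enormSq (S.mulVec (d - F f))
        + (1 / 2) * ∑ j, (γ j) ^ (-(p j) / 2) * |(Lcomb Lp Lq θ).mulVec f j| ^ (p j)
        + ∑ j, gammaPenalty γbar r (r * β - 3 / 2) (γ j)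
        + (1 / (2 * η)) * enormSq ((Lone n).mulVec θ) := by
  simp only [aarm, gammaPenalty, Finset.sum_sub_distrib, ← Finset.mul_sum]
  ring

variable {S d F Lp Lq p r γbar β η}

theorem bounds_of_aarm_le (hη : 0 < η) {φ₀ : ℝ}
    (hφ₀ : ∀ t, 0 < t → φ₀ ≤ gammaPenalty γbar r (r * β - 3 / 2) t)
    {f γ θ : Fin (n + 1) → ℝ} (hγ : ∀ j, 0 < γ j) {M : ℝ}
    (hM : aarm S d F Lp Lq p r γbar β η f γ θ ≤ M) :
    (∀ j, gammaPenalty γbar r (r * β - 3 / 2) (γ j) ≤ M - n * φ₀) ∧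
      ∀ j, (γ j) ^ (-(p j) / 2) * |(Lcomb Lp Lq θ).mulVec f j| ^ (p j)
        ≤ 2 * (M - (n + 1) * φ₀) := by
  set g := fun j => gammaPenalty γbar r (r * β - 3 / 2) (γ j)
  set h := fun j => (γ j) ^ (-(p j) / 2) * |(Lcomb Lp Lq θ).mulVec f j| ^ (p j)
  have h_nonneg : ∀ j, 0 ≤ h j := fun j =>
    mul_nonneg (rpow_nonneg (hγ j).le _) (rpow_nonneg (abs_nonneg _) _)
  have hsum : (1 / 2) * ∑ j, h j + ∑ j, g j ≤ M := by
    rw [aarm_eq_add_sum_gammaPenalty] at hM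
    have hmisfit := enormSq_nonneg (S.mulVec (d - F f))
    have hsmooth : 0 ≤ (1 / (2 * η)) * enormSq ((Lone n).mulVec θ) :=
      mul_nonneg (by positivity) (enormSq_nonneg _)
    linarith
  have hg : ∀ j, g j - φ₀ ≤ ∑ i, g i - (n + 1) * φ₀ := by
    intro j
    have := Finset.single_le_sum (fun i _ => sub_nonneg.2 (hφ₀ _ (hγ i))) (Finset.mem_univ j)
    simpa [Finset.sum_sub_distrib] using this
  have h_le_sum : ∀ j, h j ≤ ∑ i, h i := fun j =>
    Finset.single_le_sum (fun i _ => h_nonneg i) (Finset.mem_univ j)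
  have hsum_h_nonneg : 0 ≤ ∑ i, h i := Finset.sum_nonneg fun i _ => h_nonneg i
  refine ⟨fun j => ?_, fun j => ?_⟩
  · linarith [hg j]
  · linarith [hg j, h_le_sum j, hφ₀ _ (hγ j)]

theorem exists_bounds_of_aarm_le (hLp : Lp.IsLowerTriangular) (hLq : Lq.IsLowerTriangular)
    (hLpDiag : ∀ i, Lp i i = 1) (hLqDiag : ∀ i, Lq i i = 1) (hp : ∀ j, 1 ≤ p j)
    (hr : 0 < r) (hγbar : 0 < γbar) (hβ : 3 / 2 < r * β) (hη : 0 < η) (M : ℝ) :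
    ∃ R a b, 0 < a ∧ ∀ f γ θ : Fin (n + 1) → ℝ, (∀ j, 0 < γ j) →
      (∀ j, θ j ∈ Set.Icc (0 : ℝ) 1) → aarm S d F Lp Lq p r γbar β η f γ θ ≤ M →
        ‖f‖ ≤ R ∧ ∀ j, γ j ∈ Set.Icc a b := by
  have hc : 0 < r * β - 3 / 2 := by linarith
  obtain ⟨φ₀, hφ₀⟩ := exists_le_gammaPenalty hc hr hγbar
  obtain ⟨a, b, ha, hab⟩ := exists_Icc_of_gammaPenalty_le hc hr hγbar (M - n * φ₀)
  obtain ⟨C, hC0, hC⟩ := exists_norm_le_mul_norm_mulVec_of_det_eq_one continuous_Lcomb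
    (isCompact_univ_pi fun _ => isCompact_Icc) fun θ _ => det_Lcomb hLp hLq hLpDiag hLqDiag θ
  set B := 2 * (M - (n + 1) * φ₀)
  refine ⟨C * (max 1 B * √b), a, b, ha, fun f γ θ hγ hθ hM => ?_⟩
  obtain ⟨hpen, hfit⟩ := bounds_of_aarm_le hη hφ₀ hγ hM
  have hγab : ∀ j, γ j ∈ Set.Icc a b := fun j => hab _ (hγ j) (hpen j)
  have hy : ‖Lcomb Lp Lq θ *ᵥ f‖ ≤ max 1 B * √b :=
    (pi_norm_le_iff_of_nonneg (by positivity)).2 fun j =>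
      abs_le_of_rpow_neg_half_mul_rpow_le (hp j) (hγ j) (hγab j).2 (hfit j)
  exact ⟨(hC θ (Set.mem_univ_pi.2 hθ) f).trans (mul_le_mul_of_nonneg_left hy hC0), hγab⟩

theorem exists_isCompact_sublevel_aarm (hLp : Lp.IsLowerTriangular)
    (hLq : Lq.IsLowerTriangular) (hLpDiag : ∀ i, Lp i i = 1) (hLqDiag : ∀ i, Lq i i = 1)
    (hp : ∀ j, 1 ≤ p j) (hr : 0 < r) (hγbar : 0 < γbar) (hβ : 3 / 2 < r * β) (hη : 0 < η)
    (M : ℝ) :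
    ∃ K ⊆ aarmDomain n, IsCompact K ∧
      ∀ x ∈ aarmDomain n, aarm S d F Lp Lq p r γbar β η x.1 x.2.1 x.2.2 ≤ M → x ∈ K := by
  obtain ⟨R, a, b, ha, hbound⟩ :=
    exists_bounds_of_aarm_le hLp hLq hLpDiag hLqDiag hp hr hγbar hβ hη M
  refine ⟨Metric.closedBall 0 R ×ˢ (Set.univ.pi fun _ => Set.Icc a b) ×ˢ
    Set.univ.pi fun _ => Set.Icc 0 1, ?_, ?_, ?_⟩
  · rintro x ⟨-, hγ, hθ⟩
    exact ⟨trivial, fun j _ => ha.trans_le (hγ j trivial).1, hθ⟩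
  · exact (isCompact_closedBall _ _).prod
      ((isCompact_univ_pi fun _ => isCompact_Icc).prod (isCompact_univ_pi fun _ => isCompact_Icc))
  · rintro x ⟨-, hγ, hθ⟩ hM
    obtain ⟨hR, hab⟩ :=
      hbound x.1 x.2.1 x.2.2 (fun j => hγ j trivial) (fun j => hθ j trivial) hM
    exact ⟨mem_closedBall_zero_iff.2 hR, fun j _ => hab j, hθ⟩

theorem continuousOn_aarm (hF : Continuous F) (hp : ∀ j, 0 ≤ p j) (hr : 0 ≤ r) :
    ContinuousOn (fun x => aarm S d F Lp Lq p r γbar β η x.1 x.2.1 x.2.2) (aarmDomain n) := by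
  refine fun x hx => ContinuousAt.continuousWithinAt ?_
  have hγ : ∀ j, x.2.1 j ≠ 0 := fun j => (hx.2.1 j trivial).ne'
  unfold aarm enormSq
  fun_prop (disch := first
    | exact Or.inl (hγ _)
    | exact hγ _
    | exact Or.inr (hp _)
    | exact Or.inr hr)

end Functional

/-- the adaptive augmented regularization functional `T` attains its infimum on
`ℝ^(n+1) × (0,∞)^(n+1) × [0,1]^(n+1)`. -/
theorem stmt1 (n m : ℕ) (S : Matrix (Fin m) (Fin m) ℝ) (d : Fin m → ℝ)
    (F : (Fin (n + 1) → ℝ) → (Fin m → ℝ)) (hF : Continuous F)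
    (Lp Lq : Matrix (Fin (n + 1)) (Fin (n + 1)) ℝ)
    (hLpLow : ∀ i j : Fin (n + 1), i < j → Lp i j = 0)
    (hLpDiag : ∀ i : Fin (n + 1), Lp i i = 1)
    (hLqLow : ∀ i j : Fin (n + 1), i < j → Lq i j = 0)
    (hLqDiag : ∀ i : Fin (n + 1), Lq i i = 1)
    (p : Fin (n + 1) → ℝ) (hp : ∀ j, p j = 1 ∨ p j = 2)
    (r γbar β η : ℝ) (hr : 0 < r) (hγbar : 0 < γbar) (hβ : 3 / 2 < r * β) (hη : 0 < η)
    (T : (Fin (n + 1) → ℝ) → (Fin (n + 1) → ℝ) → (Fin (n + 1) → ℝ) → ℝ)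
    (hT : ∀ f γ θ, T f γ θ =
      (1 / 2) * enormSq (S.mulVec (d - F f))
      + (1 / 2) * ∑ j, (γ j) ^ (-(p j) / 2) * |(Lcomb Lp Lq θ).mulVec f j| ^ (p j)
      + (1 / 2) * ∑ j, Real.log (γ j)
      + ∑ j, (γ j / γbar) ^ r
      - (r * β - 1) * ∑ j, Real.log (γ j)
      + (1 / (2 * η)) * enormSq ((Lone n).mulVec θ)) :
    ∃ (f γ θ : Fin (n + 1) → ℝ), (∀ j, 0 < γ j) ∧ (∀ j, θ j ∈ Set.Icc (0 : ℝ) 1) ∧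
      ∀ (f' γ' θ' : Fin (n + 1) → ℝ), (∀ j, 0 < γ' j) → (∀ j, θ' j ∈ Set.Icc (0 : ℝ) 1) →
        T f γ θ ≤ T f' γ' θ' := by
  obtain rfl : T = aarm S d F Lp Lq p r γbar β η := funext₃ hT
  have hp1 : ∀ j, 1 ≤ p j := fun j => by rcases hp j with h | h <;> linarith
  have hx₀ : ((0, fun _ => γbar, 0) : (Fin (n + 1) → ℝ) × (Fin (n + 1) → ℝ) × (Fin (n + 1) → ℝ))
      ∈ aarmDomain n :=
    ⟨trivial, fun _ _ => hγbar, fun _ _ => ⟨le_rfl, zero_le_one⟩⟩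
  obtain ⟨K, hKD, hK, hsub⟩ := exists_isCompact_sublevel_aarm (S := S) (d := d) (F := F)
    (fun i j h => hLpLow i j h) (fun i j h => hLqLow i j h) hLpDiag hLqDiag hp1 hr hγbar hβ hη
    (aarm S d F Lp Lq p r γbar β η 0 (fun _ => γbar) 0)
  obtain ⟨x, ⟨-, hγ, hθ⟩, hmin⟩ := exists_isMinOn_of_sublevel_subset hK hKD
    (continuousOn_aarm hF (fun j => zero_le_one.trans (hp1 j)) hr.le) hx₀ hsub
  refine ⟨x.1, x.2.1, x.2.2, fun j => hγ j trivial, fun j => hθ j trivial,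
    fun f' γ' θ' hγ' hθ' => ?_⟩
  exact isMinOn_iff.1 hmin (f', γ', θ') ⟨trivial, fun j _ => hγ' j, fun j _ => hθ' j⟩
end

section
/- Let F : ℝ^n → ℝ be a convex function, 𝒻 : ℝ^n → ℝ^m any map, S a real m×m matrix, and d ∈ ℝ^m. Suppose (f^m)_{m≥1} ⊂ ℝ^n and (p^m)_{m≥1} ⊂ ℝ^n satisfy: p^m is a subgradient of F at f^m (i.e., F(u) ≥ F(f^m) + ⟨p^m, u − f^m⟩ for all u), and f^{m+1} is a global minimizer over ℝ^n of the map f ↦ F(f) − F(f^m) − ⟨p^m, f − f^m⟩ + (1/2)‖S(d − 𝒻(f))‖₂². Then the data-fitting error is non-increasing: ‖S(d − 𝒻(f^{m+1}))‖₂ ≤ ‖S(d − 𝒻(f^m))‖₂ for all m ≥ 1. -/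
open Matrix Finset

noncomputable def enorm {m : ℕ} (x : Fin m → ℝ) : ℝ := Real.sqrt (enormSq x)

/-! The Bregman term `D(f) = F(f) − F(fᵏ) − ⟨pᵏ, f − fᵏ⟩` of the objective is nonnegative because
`pᵏ` is a subgradient, and vanishes at `f = fᵏ`. Comparing the minimizer `fᵏ⁺¹` with the competitor
`fᵏ` therefore bounds the fitting term at `fᵏ⁺¹` by the one at `fᵏ`. -/

section Bregman

variable {ι : Type*} [Fintype ι]

/-- The Bregman distance `D_F^p(u, v)`. -/
def bregmanDist (F : (ι → ℝ) → ℝ) (p u v : ι → ℝ) : ℝ :=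
  F u - F v - p ⬝ᵥ (u - v)

@[simp]
theorem bregmanDist_self (F : (ι → ℝ) → ℝ) (p v : ι → ℝ) : bregmanDist F p v v = 0 := by
  simp [bregmanDist]

theorem bregmanDist_nonneg {F : (ι → ℝ) → ℝ} {p v : ι → ℝ}
    (hp : ∀ u, F v + p ⬝ᵥ (u - v) ≤ F u) (u : ι → ℝ) : 0 ≤ bregmanDist F p u v := by
  have := hp u
  unfold bregmanDist
  linarith

end Bregman

theorem le_of_forall_add_le_add_of_nonneg {α β : Type*} [AddCommGroup β] [PartialOrder β]
    [IsOrderedAddMonoid β] {D G : α → β} {x w : α} (hDx : 0 ≤ D x) (hDw : D w = 0)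
    (hmin : ∀ u, D x + G x ≤ D u + G u) : G x ≤ G w :=
  calc G x ≤ D x + G x := le_add_of_nonneg_left hDx
    _ ≤ D w + G w := hmin w
    _ = G w := by rw [hDw, zero_add]

theorem stmt5_general (n m : ℕ) (F : (Fin n → ℝ) → ℝ)
    (𝒻 : (Fin n → ℝ) → (Fin m → ℝ)) (S : Matrix (Fin m) (Fin m) ℝ) (d : Fin m → ℝ)
    (f p : ℕ → (Fin n → ℝ))
    (hsub : ∀ k : ℕ, 1 ≤ k → ∀ u : Fin n → ℝ,
      F (f k) + dotProduct (p k) (u - f k) ≤ F u)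
    (hmin : ∀ k : ℕ, 1 ≤ k → ∀ u : Fin n → ℝ,
      F (f (k + 1)) - F (f k) - dotProduct (p k) (f (k + 1) - f k)
          + (1 / 2) * enormSq (S.mulVec (d - 𝒻 (f (k + 1))))
        ≤ F u - F (f k) - dotProduct (p k) (u - f k)
          + (1 / 2) * enormSq (S.mulVec (d - 𝒻 u))) :
    ∀ k : ℕ, 1 ≤ k →
      _root_.enorm (S.mulVec (d - 𝒻 (f (k + 1)))) ≤ _root_.enorm (S.mulVec (d - 𝒻 (f k))) := by
  intro k hk
  have hfit : (1 / 2 : ℝ) * enormSq (S *ᵥ (d - 𝒻 (f (k + 1))))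
      ≤ (1 / 2) * enormSq (S *ᵥ (d - 𝒻 (f k))) :=
    le_of_forall_add_le_add_of_nonneg (D := fun u => bregmanDist F (p k) u (f k))
      (G := fun u => (1 / 2) * enormSq (S *ᵥ (d - 𝒻 u)))
      (bregmanDist_nonneg (hsub k hk) _) (bregmanDist_self ..) (hmin k hk)
  exact Real.sqrt_le_sqrt (by linarith)

/-- for the (modified) Bregman iterative algorithm with convex `F`, the
data-fitting error `‖S(d − 𝒻(f^m))‖₂` is non-increasing in `m ≥ 1`. -/
theorem stmt5 (n m : ℕ) (F : (Fin n → ℝ) → ℝ) (hF : ConvexOn ℝ Set.univ F)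
    (𝒻 : (Fin n → ℝ) → (Fin m → ℝ)) (S : Matrix (Fin m) (Fin m) ℝ) (d : Fin m → ℝ)
    (f p : ℕ → (Fin n → ℝ))
    (hsub : ∀ k : ℕ, 1 ≤ k → ∀ u : Fin n → ℝ,
      F (f k) + dotProduct (p k) (u - f k) ≤ F u)
    (hmin : ∀ k : ℕ, 1 ≤ k → ∀ u : Fin n → ℝ,
      F (f (k + 1)) - F (f k) - dotProduct (p k) (f (k + 1) - f k)
          + (1 / 2) * enormSq (S.mulVec (d - 𝒻 (f (k + 1))))
        ≤ F u - F (f k) - dotProduct (p k) (u - f k)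
          + (1 / 2) * enormSq (S.mulVec (d - 𝒻 u))) :
    ∀ k : ℕ, 1 ≤ k →
      _root_.enorm (S.mulVec (d - 𝒻 (f (k + 1)))) ≤ _root_.enorm (S.mulVec (d - 𝒻 (f k))) :=
  stmt5_general n m F 𝒻 S d f p hsub hmin
end
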